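/- In the algebra A' = k⟨x,y,z⟩/(yz−αzy+x², zx−αxz, xy−αyx) with α of order ℓ = 3m where m = |α³|, the element x^m·y^m·z^m is central in A'. -/
import Mathlib


noncomputable section

/-- Defining relations of the Type S' Calabi–Yau quantum polynomial algebra
`A' = k⟨x,y,z⟩/(yz - αzy + x², zx - αxz, xy - αyx)`. -/
inductive SRel {k : Type} [Field k] (α : k) :
    FreeAlgebra k (Fin 3) → FreeAlgebra k (Fin 3) → Prop
  | g1 : SRel α (FreeAlgebra.ι k 1 * FreeAlgebra.ι k 2)
      (α • (FreeAlgebra.ι k 2 * FreeAlgebra.ι k 1) - FreeAlgebra.ι k 0 * FreeAlgebra.ι k 0)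
  | g2 : SRel α (FreeAlgebra.ι k 2 * FreeAlgebra.ι k 0)
      (α • (FreeAlgebra.ι k 0 * FreeAlgebra.ι k 2))
  | g3 : SRel α (FreeAlgebra.ι k 0 * FreeAlgebra.ι k 1)
      (α • (FreeAlgebra.ι k 1 * FreeAlgebra.ι k 0))

/-- The image of `x` in `A'`. -/
def SX {k : Type} [Field k] (α : k) : RingQuot (SRel α) :=
  RingQuot.mkAlgHom k (SRel α) (FreeAlgebra.ι k 0)

/-- The image of `y` in `A'`. -/
def SY {k : Type} [Field k] (α : k) : RingQuot (SRel α) :=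
  RingQuot.mkAlgHom k (SRel α) (FreeAlgebra.ι k 1)

/-- The image of `z` in `A'`. -/
def SZ {k : Type} [Field k] (α : k) : RingQuot (SRel α) :=
  RingQuot.mkAlgHom k (SRel α) (FreeAlgebra.ι k 2)

/-- The central element `g = xyz + (1-α³)⁻¹ x³` of `A'`. -/
def SG {k : Type} [Field k] (α : k) : RingQuot (SRel α) :=
  SX α * SY α * SZ α + (1 - α ^ 3)⁻¹ • (SX α) ^ 3

section AuxStmt11

variable {k : Type} [Field k] (α : k)

lemma aYZ : SY α * SZ α = α • (SZ α * SY α) - SX α * SX α := by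
  have h := RingQuot.mkAlgHom_rel k (SRel.g1 (α := α))
  simpa [SX, SY, SZ, map_mul, map_sub, map_smul] using h

lemma aZX : SZ α * SX α = α • (SX α * SZ α) := by
  have h := RingQuot.mkAlgHom_rel k (SRel.g2 (α := α))
  simpa [SX, SY, SZ, map_mul, map_smul] using h

lemma aXY : SX α * SY α = α • (SY α * SX α) := by
  have h := RingQuot.mkAlgHom_rel k (SRel.g3 (α := α))
  simpa [SX, SY, SZ, map_mul, map_smul] using h

lemma aZY : α • (SZ α * SY α) = SY α * SZ α + SX α * SX α := by
  rw [aYZ]; abel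

lemma pZX (n : ℕ) : SZ α * SX α ^ n = α ^ n • (SX α ^ n * SZ α) := by
  induction n with
  | zero => simp
  | succ n ih =>
    rw [pow_succ, ← mul_assoc, ih, smul_mul_assoc, mul_assoc, aZX, pow_succ]
    simp [smul_smul, mul_assoc, mul_comm]

lemma pXY (n : ℕ) : SX α ^ n * SY α = α ^ n • (SY α * SX α ^ n) := by
  induction n with
  | zero => simp
  | succ n ih =>
    rw [pow_succ', mul_assoc, ih, mul_smul_comm, ← mul_assoc, aXY, pow_succ']
    simp [smul_smul, mul_assoc, mul_comm]

lemma aXXY : SX α * SX α * SY α = (α * α) • (SY α * (SX α * SX α)) := by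
  rw [mul_assoc, aXY, mul_smul_comm, ← mul_assoc, aXY]
  simp [smul_smul, mul_assoc]

lemma aZXX : SZ α * (SX α * SX α) = (α * α) • (SX α * SX α * SZ α) := by
  rw [← mul_assoc, aZX, smul_mul_assoc, mul_assoc, aZX]
  simp [smul_smul, mul_assoc]


open Finset in
lemma pZYpow (n : ℕ) :
    α ^ (n+1) • (SZ α * SY α ^ (n+1)) =
      SY α ^ (n+1) * SZ α
        + (∑ j ∈ range (n+1), (α^3)^j) • (SY α ^ n * (SX α * SX α)) := by
  induction n with
  | zero => simpa using aZY α
  | succ n ih =>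
    have h1 : α ^ (n+1+1) • (SZ α * SY α ^ (n+1+1)) =
        α • ((α ^ (n+1) • (SZ α * SY α ^ (n+1))) * SY α) := by
      rw [smul_mul_assoc, smul_smul, ← pow_succ', pow_succ (SY α), ← mul_assoc]
    rw [h1, ih, add_mul, smul_add, smul_mul_assoc, mul_assoc, ← mul_smul_comm, aZY,
      mul_assoc (SY α ^ n), aXXY, mul_smul_comm, mul_add,
      ← mul_assoc (SY α ^ (n+1)) (SY α) (SZ α), ← pow_succ,
      ← mul_assoc (SY α ^ n) (SY α), ← pow_succ]
    conv_rhs => rw [geom_sum_succ]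
    module

open Finset in
lemma pZpowY (n : ℕ) :
    α ^ (n+1) • (SZ α ^ (n+1) * SY α) =
      SY α * SZ α ^ (n+1)
        + (∑ j ∈ range (n+1), (α^3)^j) • ((SX α * SX α) * SZ α ^ n) := by
  induction n with
  | zero => simpa using aZY α
  | succ n ih =>
    have h1 : α ^ (n+1+1) • (SZ α ^ (n+1+1) * SY α) =
        α • (SZ α * (α ^ (n+1) • (SZ α ^ (n+1) * SY α))) := by
      rw [mul_smul_comm, smul_smul, ← pow_succ', pow_succ' (SZ α), mul_assoc]
    rw [h1, ih, mul_add, smul_add, ← mul_assoc, ← smul_mul_assoc, aZY,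
      mul_smul_comm, ← mul_assoc, aZXX, smul_mul_assoc, add_mul,
      pow_succ' (SZ α), ← mul_assoc, mul_assoc (SX α * SX α), ← pow_succ']
    conv_rhs => rw [geom_sum_succ]
    rw [mul_assoc (SY α * SZ α), ← pow_succ' (SZ α) n, mul_assoc (SY α), ← pow_succ']
    module

lemma pZpowX (n : ℕ) : SZ α ^ n * SX α = α ^ n • (SX α * SZ α ^ n) := by
  induction n with
  | zero => simp
  | succ n ih =>
    rw [pow_succ' (SZ α), mul_assoc, ih, mul_smul_comm, ← mul_assoc, aZX,
      smul_mul_assoc, smul_smul, mul_assoc, ← pow_succ', ← pow_succ]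

lemma pXYpow (n : ℕ) : SX α * SY α ^ n = α ^ n • (SY α ^ n * SX α) := by
  induction n with
  | zero => simp
  | succ n ih =>
    rw [pow_succ (SY α), ← mul_assoc, ih, smul_mul_assoc, mul_assoc, aXY,
      mul_smul_comm, smul_smul, ← mul_assoc, ← pow_succ, ← pow_succ]

open Finset in
lemma cZY (m : ℕ) (hsum : ∑ j ∈ range m, (α^3)^j = 0) :
    α ^ m • (SZ α * SY α ^ m) = SY α ^ m * SZ α := by
  cases m with
  | zero => simp
  | succ n =>
    have h := pZYpow α n
    rw [hsum, zero_smul, add_zero] at h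
    exact h

open Finset in
lemma cZmY (m : ℕ) (hsum : ∑ j ∈ range m, (α^3)^j = 0) :
    α ^ m • (SZ α ^ m * SY α) = SY α * SZ α ^ m := by
  cases m with
  | zero => simp
  | succ n =>
    have h := pZpowY α n
    rw [hsum, zero_smul, add_zero] at h
    exact h

lemma commX (m : ℕ) :
    SX α ^ m * SY α ^ m * SZ α ^ m * SX α = SX α * (SX α ^ m * SY α ^ m * SZ α ^ m) := by
  calc SX α ^ m * SY α ^ m * SZ α ^ m * SX α
      = SX α ^ m * SY α ^ m * (SZ α ^ m * SX α) := by rw [mul_assoc]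
    _ = SX α ^ m * SY α ^ m * (α ^ m • (SX α * SZ α ^ m)) := by rw [pZpowX]
    _ = SX α ^ m * ((α ^ m • (SY α ^ m * SX α)) * SZ α ^ m) := by
        simp only [mul_smul_comm, smul_mul_assoc, mul_assoc]
    _ = SX α ^ m * ((SX α * SY α ^ m) * SZ α ^ m) := by rw [← pXYpow]
    _ = (SX α ^ m * SX α) * (SY α ^ m * SZ α ^ m) := by simp only [mul_assoc]
    _ = (SX α * SX α ^ m) * (SY α ^ m * SZ α ^ m) := by rw [← pow_succ, ← pow_succ']
    _ = SX α * (SX α ^ m * SY α ^ m * SZ α ^ m) := by simp only [mul_assoc]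

open Finset in
lemma commZ (m : ℕ) (hsum : ∑ j ∈ range m, (α^3)^j = 0) :
    SZ α * (SX α ^ m * SY α ^ m * SZ α ^ m) = SX α ^ m * SY α ^ m * SZ α ^ m * SZ α := by
  calc SZ α * (SX α ^ m * SY α ^ m * SZ α ^ m)
      = (SZ α * SX α ^ m) * (SY α ^ m * SZ α ^ m) := by simp only [mul_assoc]
    _ = (α ^ m • (SX α ^ m * SZ α)) * (SY α ^ m * SZ α ^ m) := by rw [pZX]
    _ = SX α ^ m * ((α ^ m • (SZ α * SY α ^ m)) * SZ α ^ m) := by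
        simp only [mul_smul_comm, smul_mul_assoc, mul_assoc]
    _ = SX α ^ m * ((SY α ^ m * SZ α) * SZ α ^ m) := by rw [cZY α m hsum]
    _ = SX α ^ m * (SY α ^ m * (SZ α * SZ α ^ m)) := by simp only [mul_assoc]
    _ = SX α ^ m * (SY α ^ m * (SZ α ^ m * SZ α)) := by rw [← pow_succ', ← pow_succ]
    _ = SX α ^ m * SY α ^ m * SZ α ^ m * SZ α := by simp only [mul_assoc]

open Finset in
lemma commY (m : ℕ) (hsum : ∑ j ∈ range m, (α^3)^j = 0) (hαm : α ^ m ≠ 0) :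
    SY α * (SX α ^ m * SY α ^ m * SZ α ^ m) = SX α ^ m * SY α ^ m * SZ α ^ m * SY α := by
  have h1 : α ^ m • (SY α * (SX α ^ m * SY α ^ m * SZ α ^ m)) =
      SX α ^ m * ((SY α ^ m * SY α) * SZ α ^ m) := by
    calc α ^ m • (SY α * (SX α ^ m * SY α ^ m * SZ α ^ m))
        = (α ^ m • (SY α * SX α ^ m)) * (SY α ^ m * SZ α ^ m) := by
          simp only [smul_mul_assoc, mul_assoc]
      _ = (SX α ^ m * SY α) * (SY α ^ m * SZ α ^ m) := by rw [← pXY]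
      _ = SX α ^ m * ((SY α * SY α ^ m) * SZ α ^ m) := by simp only [mul_assoc]
      _ = SX α ^ m * ((SY α ^ m * SY α) * SZ α ^ m) := by rw [← pow_succ', ← pow_succ]
  have h2 : α ^ m • (SX α ^ m * SY α ^ m * SZ α ^ m * SY α) =
      SX α ^ m * ((SY α ^ m * SY α) * SZ α ^ m) := by
    calc α ^ m • (SX α ^ m * SY α ^ m * SZ α ^ m * SY α)
        = SX α ^ m * (SY α ^ m * (α ^ m • (SZ α ^ m * SY α))) := by
          simp only [mul_smul_comm, mul_assoc]
      _ = SX α ^ m * (SY α ^ m * (SY α * SZ α ^ m)) := by rw [cZmY α m hsum]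
      _ = SX α ^ m * ((SY α ^ m * SY α) * SZ α ^ m) := by simp only [mul_assoc]
  apply smul_right_injective (RingQuot (SRel α)) hαm
  show α ^ m • _ = α ^ m • _
  rw [h1, h2]

end AuxStmt11

theorem stmt11 {k : Type} [Field k] [IsAlgClosed k] [CharZero k] (α : k) (ℓ m : ℕ)
    (hprim : IsPrimitiveRoot α ℓ) (hα3 : α ^ 3 ≠ 1) (h3 : 3 ∣ ℓ) (hm : m = ℓ / 3) :
    (SX α) ^ m * (SY α) ^ m * (SZ α) ^ m ∈
      Subalgebra.center k (RingQuot (SRel α)) := by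
  have hl : ℓ = 3 * m := by
    obtain ⟨c, rfl⟩ := h3
    omega
  have h3m : (α ^ 3) ^ m = 1 := by
    rw [← pow_mul, ← hl, hprim.pow_eq_one]
  have hsum : ∑ j ∈ Finset.range m, (α ^ 3) ^ j = 0 := by
    have h := geom_sum_mul (α ^ 3) m
    rw [h3m, sub_self] at h
    rcases mul_eq_zero.mp h with h' | h'
    · exact h'
    · exact absurd (by rwa [sub_eq_zero] at h') hα3
  have hαm : α ^ m ≠ 0 := by
    cases m with
    | zero => simp
    | succ n =>
      apply pow_ne_zero
      exact hprim.ne_zero (by omega)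
  rw [Subalgebra.mem_center_iff]
  intro b
  obtain ⟨f, rfl⟩ := RingQuot.mkAlgHom_surjective k (SRel α) b
  induction f using FreeAlgebra.induction with
  | grade0 r =>
    rw [AlgHom.commutes]
    exact Algebra.commutes r _
  | grade1 i =>
    fin_cases i
    · exact (commX α m).symm
    · exact commY α m hsum hαm
    · exact commZ α m hsum
  | mul a b ha hb =>
    rw [map_mul, mul_assoc, hb, ← mul_assoc, ha, mul_assoc]
  | add a b ha hb =>
    rw [map_add, add_mul, mul_add, ha, hb]
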